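/- Let N ≥ 1. Let S be the swap operator on ℂ^N ⊗ ℂ^N, defined by S_{(a₁,a₂),(b₁,b₂)} = δ_{a₁ b₂} δ_{a₂ b₁}, and write S⁰ = 1. Let G be a random N²×N² complex matrix whose entries satisfy E[G_{ij} · conj(G_{kl})] = δ_{ik} δ_{jl}/(2N²) for all indices i,j,k,l (indexing by pairs). Set v₂ = G + S G S. Then for a, b ∈ {0,1}: (1/N²)·E[Tr(v₂† S^a v₂ S^b)] = 1 + 1/N² if a = b, and 2/N if a ≠ b. Hence the transfer matrix of the parity-symmetric dual Ginibre model is the 2×2 ferromagnetic Ising transfer matrix with diagonal entries 1 + 1/N² and off-diagonal entries 2/N. -/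

import Mathlib

open Matrix MeasureTheory

/-- The swap operator `S` on `ℂ^N ⊗ ℂ^N`: `S_{(a₁,a₂),(b₁,b₂)} = δ_{a₁b₂} δ_{a₂b₁}`. -/
def swapMat (N : ℕ) : Matrix (Fin N × Fin N) (Fin N × Fin N) ℂ :=
  Matrix.of fun p q => if p.1 = q.2 ∧ p.2 = q.1 then 1 else 0

lemma swapMat_mul_self (N : ℕ) : swapMat N * swapMat N = 1 := by
  ext p q
  simp only [swapMat, Matrix.mul_apply, Matrix.of_apply, Matrix.one_apply]
  rw [Finset.sum_eq_single (p.2, p.1)]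
  · simp [Prod.ext_iff, and_comm, eq_comm]
  · intro r _ hr
    rw [if_neg, zero_mul]
    rintro ⟨h1, h2⟩
    exact hr (by simp [Prod.ext_iff, ← h1, ← h2])
  · simp

lemma swapMat_conjTranspose (N : ℕ) : (swapMat N)ᴴ = swapMat N := by
  ext p q
  simp only [swapMat, Matrix.conjTranspose_apply, Matrix.of_apply]
  rw [apply_ite star]
  simp [and_comm, eq_comm]

lemma swapMat_trace (N : ℕ) : (swapMat N).trace = N := by
  simp only [Matrix.trace, Matrix.diag, swapMat, Matrix.of_apply]
  rw [Fintype.sum_prod_type]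
  have : ∀ x : Fin N, (∑ y : Fin N, if x = y ∧ y = x then (1:ℂ) else 0) = 1 := by
    intro x
    rw [Finset.sum_eq_single x] <;> simp +contextual [eq_comm]
  simp [this]

section Aux

variable {ι : Type*} [Fintype ι] [DecidableEq ι]

lemma trace_expand (M A B : Matrix ι ι ℂ) :
    (Mᴴ * A * M * B).trace
      = ∑ i, ∑ l, ∑ k, ∑ j, (A j k * B l i) * (M k l * star (M j i)) := by
  simp only [Matrix.trace, Matrix.diag, Matrix.mul_apply, Matrix.conjTranspose_apply,
    Finset.sum_mul]
  refine Finset.sum_congr rfl fun i _ => Finset.sum_congr rfl fun l _ => ?_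
  refine Finset.sum_congr rfl fun k _ => Finset.sum_congr rfl fun j _ => ?_
  ring

variable {Ω : Type*} [MeasurableSpace Ω] {P : Measure Ω}

lemma expect_trace {N : ℕ} (G : Ω → Matrix ι ι ℂ)
    (hint : ∀ i j k l, Integrable (fun ω => G ω i j * star (G ω k l)) P)
    (hmom : ∀ i j k l,
      (∫ ω, G ω i j * star (G ω k l) ∂P) = (if i = k ∧ j = l then 1 else 0) / (2 * (N : ℂ) ^ 2))
    (A B : Matrix ι ι ℂ) :
    ∫ ω, ((G ω)ᴴ * A * (G ω) * B).trace ∂P = A.trace * B.trace / (2 * (N : ℂ) ^ 2) := by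
  have h1 : ∫ ω, ((G ω)ᴴ * A * (G ω) * B).trace ∂P
      = ∑ i, ∑ l, ∑ k, ∑ j, (A j k * B l i) * ∫ ω, (G ω k l * star (G ω j i)) ∂P := by
    simp_rw [trace_expand]
    rw [integral_finset_sum _ fun i _ => by
      exact integrable_finset_sum _ fun l _ => integrable_finset_sum _ fun k _ =>
        integrable_finset_sum _ fun j _ => ((hint k l j i).const_mul _)]
    refine Finset.sum_congr rfl fun i _ => ?_
    rw [integral_finset_sum _ fun l _ => integrable_finset_sum _ fun k _ =>
        integrable_finset_sum _ fun j _ => ((hint k l j i).const_mul _)]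
    refine Finset.sum_congr rfl fun l _ => ?_
    rw [integral_finset_sum _ fun k _ => integrable_finset_sum _ fun j _ =>
        ((hint k l j i).const_mul _)]
    refine Finset.sum_congr rfl fun k _ => ?_
    rw [integral_finset_sum _ fun j _ => ((hint k l j i).const_mul _)]
    exact Finset.sum_congr rfl fun j _ => integral_const_mul _ _
  rw [h1]
  simp_rw [hmom]
  calc ∑ i, ∑ l, ∑ k, ∑ j, A j k * B l i * ((if k = j ∧ l = i then (1:ℂ) else 0) / (2*(N:ℂ)^2))
      = ∑ i, ∑ l, ∑ k, A k k * B l i * ((if l = i then (1:ℂ) else 0) / (2*(N:ℂ)^2)) := by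
        refine Finset.sum_congr rfl fun i _ => Finset.sum_congr rfl fun l _ =>
          Finset.sum_congr rfl fun k _ => ?_
        rw [Finset.sum_eq_single k]
        · by_cases h : l = i <;> simp [h]
        · intro j _ hjk
          have h2 : ¬(k = j ∧ l = i) := fun h => hjk h.1.symm
          simp [h2]
        · simp
    _ = ∑ i, ∑ k, A k k * (B i i / (2*(N:ℂ)^2)) := by
        refine Finset.sum_congr rfl fun i _ => ?_
        rw [Finset.sum_eq_single i]
        · exact Finset.sum_congr rfl fun k _ => by simp; ring
        · intro l _ hl; simp [hl]
        · simp
    _ = A.trace * B.trace / (2*(N:ℂ)^2) := by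
        rw [Matrix.trace, Matrix.trace]
        simp only [Matrix.diag]
        rw [Finset.sum_comm]
        simp_rw [← Finset.mul_sum, ← Finset.sum_div, ← Finset.sum_mul, mul_div_assoc]

lemma integrable_trace (G : Ω → Matrix ι ι ℂ)
    (hint : ∀ i j k l, Integrable (fun ω => G ω i j * star (G ω k l)) P)
    (A B : Matrix ι ι ℂ) :
    Integrable (fun ω => ((G ω)ᴴ * A * (G ω) * B).trace) P := by
  simp_rw [trace_expand]
  exact integrable_finset_sum _ fun i _ => integrable_finset_sum _ fun l _ =>
    integrable_finset_sum _ fun k _ => integrable_finset_sum _ fun j _ =>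
      (hint k l j i).const_mul _

lemma quad {N : ℕ} (G : Ω → Matrix ι ι ℂ)
    (hint : ∀ i j k l, Integrable (fun ω => G ω i j * star (G ω k l)) P)
    (hmom : ∀ i j k l,
      (∫ ω, G ω i j * star (G ω k l) ∂P) = (if i = k ∧ j = l then 1 else 0) / (2 * (N : ℂ) ^ 2))
    (S A B : Matrix ι ι ℂ) (hS : Sᴴ = S) :
    ∫ ω, ((G ω + S * G ω * S)ᴴ * A * (G ω + S * G ω * S) * B).trace ∂P
      = (A.trace * B.trace + (A * S).trace * (S * B).trace + (S * A).trace * (B * S).trace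
          + (S * A * S).trace * (S * B * S).trace) / (2 * (N : ℂ) ^ 2) := by
  have key : ∀ ω, ((G ω + S * G ω * S)ᴴ * A * (G ω + S * G ω * S) * B).trace
      = ((G ω)ᴴ * A * (G ω) * B).trace
        + ((G ω)ᴴ * (A * S) * (G ω) * (S * B)).trace
        + ((G ω)ᴴ * (S * A) * (G ω) * (B * S)).trace
        + ((G ω)ᴴ * (S * A * S) * (G ω) * (S * B * S)).trace := by
    intro ω
    set H := (G ω)ᴴ with hH
    set M := G ω with hM
    have hadj : (S * M * S)ᴴ = S * H * S := by
      rw [Matrix.conjTranspose_mul, Matrix.conjTranspose_mul, hS, hH, Matrix.mul_assoc]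
    rw [Matrix.conjTranspose_add, hadj]
    simp only [Matrix.add_mul, Matrix.mul_add, Matrix.trace_add]
    have e2 : (H * A * (S * M * S) * B).trace = (H * (A * S) * M * (S * B)).trace := by
      simp only [Matrix.mul_assoc]
    have e3 : (S * H * S * A * M * B).trace = (H * (S * A) * M * (B * S)).trace := by
      rw [show S * H * S * A * M * B = S * (H * (S * A) * M * B) from by
        simp only [Matrix.mul_assoc], Matrix.trace_mul_comm]
      simp only [Matrix.mul_assoc]
    have e4 : (S * H * S * A * (S * M * S) * B).trace
        = (H * (S * A * S) * M * (S * B * S)).trace := by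
      rw [show S * H * S * A * (S * M * S) * B = S * (H * (S * A * S) * M * (S * B)) from by
        simp only [Matrix.mul_assoc], Matrix.trace_mul_comm]
      simp only [Matrix.mul_assoc]
    rw [e2, e3, e4]
    ring
  simp_rw [key]
  have i1 := integrable_trace G hint A B
  have i2 := integrable_trace G hint (A * S) (S * B)
  have i3 := integrable_trace G hint (S * A) (B * S)
  have i4 := integrable_trace G hint (S * A * S) (S * B * S)
  have i12 : Integrable (fun ω => ((G ω)ᴴ * A * (G ω) * B).trace
      + ((G ω)ᴴ * (A * S) * (G ω) * (S * B)).trace) P := i1.add i2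
  have i123 : Integrable (fun ω => ((G ω)ᴴ * A * (G ω) * B).trace
      + ((G ω)ᴴ * (A * S) * (G ω) * (S * B)).trace
      + ((G ω)ᴴ * (S * A) * (G ω) * (B * S)).trace) P := i12.add i3
  rw [integral_add i123 i4, integral_add i12 i3, integral_add i1 i2,
    expect_trace G hint hmom, expect_trace G hint hmom, expect_trace G hint hmom,
    expect_trace G hint hmom]
  ring

end Aux

theorem dual_ginibre_transfer_matrix (N : ℕ) (hN : 1 ≤ N)
    {Ω : Type*} [MeasurableSpace Ω] (P : Measure Ω) [IsProbabilityMeasure P]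
    (G : Ω → Matrix (Fin N × Fin N) (Fin N × Fin N) ℂ)
    (hmeas : ∀ i j, AEStronglyMeasurable (fun ω => G ω i j) P)
    (hmom : ∀ i j k l,
      (∫ ω, G ω i j * (starRingEnd ℂ) (G ω k l) ∂P)
        = (if i = k ∧ j = l then 1 else 0) / (2 * (N : ℂ) ^ 2))
    (a b : Fin 2) :
    (1 / (N : ℂ) ^ 2) *
        ∫ ω, ((G ω + swapMat N * G ω * swapMat N)ᴴ * (swapMat N) ^ (a : ℕ) *
          (G ω + swapMat N * G ω * swapMat N) * (swapMat N) ^ (b : ℕ)).trace ∂P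
      = if a = b then 1 + 1 / (N : ℂ) ^ 2 else 2 / (N : ℂ) := by
  have hNC : (N : ℂ) ≠ 0 := Nat.cast_ne_zero.mpr (by omega)
  have hmom' : ∀ i j k l, (∫ ω, G ω i j * star (G ω k l) ∂P)
      = (if i = k ∧ j = l then 1 else 0) / (2 * (N : ℂ) ^ 2) := by
    intro i j k l
    rw [← hmom i j k l]; rfl
  have hL2 : ∀ i j, MemLp (fun ω => G ω i j) 2 P := by
    intro i j
    rw [memLp_two_iff_integrable_sq_norm (hmeas i j)]
    have hInt : Integrable (fun ω => G ω i j * star (G ω i j)) P := by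
      by_contra h
      have h0 := integral_undef h
      rw [hmom' i j i j] at h0
      simp [hNC] at h0
    have heq : (fun ω => ‖G ω i j‖ ^ 2) = fun ω => (G ω i j * star (G ω i j)).re := by
      funext ω
      rw [← starRingEnd_apply, Complex.mul_conj, Complex.ofReal_re, Complex.normSq_eq_norm_sq]
    rw [heq]
    exact hInt.re
  have hint : ∀ i j k l, Integrable (fun ω => G ω i j * star (G ω k l)) P := by
    intro i j k l
    have hstar : MemLp (fun ω => star (G ω k l)) 2 P :=
      MemLp.of_le (hL2 k l) ((Complex.continuous_conj.comp_aestronglyMeasurable (hmeas k l)))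
        (Filter.Eventually.of_forall fun ω => by simp)
    have h1 := MemLp.smul (E := ℂ) (𝕜 := ℂ) (p := 2) (q := 2) (r := 1)
      hstar (hL2 i j)
    rw [memLp_one_iff_integrable] at h1
    exact h1
  have hS2 : swapMat N * swapMat N = 1 := swapMat_mul_self N
  have hq := quad (P := P) G hint hmom' (swapMat N) (hS := swapMat_conjTranspose N)
  have hcard : ((Fintype.card (Fin N × Fin N) : ℕ) : ℂ) = (N : ℂ) * N := by
    simp [Fintype.card_prod]
  fin_cases a <;> fin_cases b <;>
    simp only [Fin.isValue, Fin.val_zero, Fin.val_one, pow_zero, pow_one] <;>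
    rw [hq] <;>
    simp only [Matrix.one_mul, Matrix.mul_one, hS2, Matrix.trace_one, swapMat_trace, hcard] <;>
    norm_num <;>
    field_simp <;>
    ring
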